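/- arXiv:2208.12282 — 2 statements merged into one kernel-verified Lean document; each statement's English description precedes it below -/
import Mathlib

section
/- [Termination of modifications, Corollary 78] Let k ≥ 1 and let h_k ∈ H_n be h_k(i) = min(i+k, n). Let h ∈ H_n satisfy h(i) ≥ h_k(i) for all i ∈ [n]. Then there exist ℓ ≥ 0 and a sequence h = h^{(0)}, h^{(1)}, …, h^{(ℓ)} = h_k of elements of H_n such that for each 0 ≤ t < ℓ: h^{(t)} ≥ h_k pointwise and h^{(t)} ≠ h_k; the set {1 ≤ i < n−k : h^{(t)}(i) = h^{(t)}(i+1)} is nonempty, with minimum j_t; the set {i ∈ [n] : h^{(t)}(i) = j_t} has at most one element; and h^{(t+1)} agrees with h^{(t)} except that h^{(t+1)}(j_t) = h^{(t)}(j_t) − 1 and, if there is a (necessarily unique) j' ∈ [n] with h^{(t)}(j') = j_t, also h^{(t+1)}(j') = j_t + 1. In words: starting from any h ≥ h_k, the deterministic modification process of the paper reaches h_k in finitely many steps. -/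
namespace GenHess

open scoped Classical

noncomputable section

/-- The vertex set `I ∪ {n}` of the weighted graph of a generalized Hessenberg function. -/
def verts (n : ℕ) (I : Finset ℕ) : Finset ℕ := insert n I

/-- `h : I ∪ {n} → I ∪ {n}` is a generalized Hessenberg function for `(I, n)`,
with `I ⊆ {1, …, n-1}`, `h i ≥ i`, and `h` weakly increasing on `I ∪ {n}`. -/
def IsGenHess (n : ℕ) (I : Finset ℕ) (h : ℕ → ℕ) : Prop :=
  (∀ i ∈ I, 1 ≤ i ∧ i ≤ n - 1) ∧
  (∀ i ∈ verts n I, h i ∈ verts n I) ∧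
  (∀ i ∈ verts n I, i ≤ h i) ∧
  (∀ i ∈ verts n I, ∀ j ∈ verts n I, i ≤ j → h i ≤ h j)

/-- The weight `w_h(i_k) = i_k - i_{k-1}` of a vertex: `v` minus the largest vertex
below `v` (or `0` if there is none). -/
def wt (n : ℕ) (I : Finset ℕ) (v : ℕ) : ℕ :=
  v - ((verts n I).filter (fun u => u < v)).sup id

/-- A proper coloring of the weighted graph `(Γ_h, w_h)` with colors in `[N]`:
each vertex `v` gets a set of colors of size `w_h(v)`, and adjacent vertices get
disjoint color sets (there is an edge `{i,j}` whenever `i < j ≤ h i`). -/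
def IsProper {N : ℕ} (n : ℕ) (I : Finset ℕ) (h : ℕ → ℕ)
    (γ : {x // x ∈ verts n I} → Finset (Fin N)) : Prop :=
  (∀ v : {x // x ∈ verts n I}, (γ v).card = wt n I v.val) ∧
  ∀ v u : {x // x ∈ verts n I}, v.val < u.val → u.val ≤ h v.val → Disjoint (γ v) (γ u)

/-- The ascent statistic `asc_h(γ) = Σ_{edges i<j} #{(a,b) ∈ γ(i)×γ(j) : a < b}`. -/
def asc {N : ℕ} (n : ℕ) (I : Finset ℕ) (h : ℕ → ℕ)
    (γ : {x // x ∈ verts n I} → Finset (Fin N)) : ℕ :=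
  ∑ v : {x // x ∈ verts n I}, ∑ u : {x // x ∈ verts n I},
    if v.val < u.val ∧ u.val ≤ h v.val then
      ((γ v ×ˢ γ u).filter fun ab => ab.1 < ab.2).card
    else 0

/-- The truncated chromatic quasisymmetric function `csf_q^N(h)`, as an element of
`ℤ[x_1,…,x_N][q]` (the outer `Polynomial.X` is `q`). -/
def csf (n : ℕ) (I : Finset ℕ) (h : ℕ → ℕ) (N : ℕ) :
    Polynomial (MvPolynomial (Fin N) ℤ) :=
  ∑ γ ∈ Finset.univ.filter
      (fun γ : {x // x ∈ verts n I} → Finset (Fin N) => IsProper n I h γ),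
    Polynomial.C (∏ v : {x // x ∈ verts n I}, ∏ a ∈ γ v, MvPolynomial.X a) *
      Polynomial.X ^ asc n I h γ

/-- The `q`-integer `[m]_q = 1 + q + ⋯ + q^{m-1}`. -/
def qNum (R : Type) [CommRing R] (m : ℕ) : Polynomial R :=
  ∑ i ∈ Finset.range m, Polynomial.X ^ i

/-- The `q`-factorial `[m]_q!`. -/
def qFact (R : Type) [CommRing R] : ℕ → Polynomial R
  | 0 => 1
  | m + 1 => qNum R (m + 1) * qFact R m

/-- The elementary symmetric polynomial `e_m(x_1,…,x_N)`, viewed as a constant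
polynomial in `q`. -/
def esym (N m : ℕ) : Polynomial (MvPolynomial (Fin N) ℤ) :=
  Polynomial.C (MvPolynomial.esymm (Fin N) ℤ m)

end

end GenHess

open GenHess

namespace GenHessAux

open scoped Classical

lemma mem_verts_iff (n : ℕ) (hn : 1 ≤ n) (x : ℕ) :
    x ∈ GenHess.verts n (Finset.Icc 1 (n - 1)) ↔ 1 ≤ x ∧ x ≤ n := by
  simp only [GenHess.verts, Finset.mem_insert, Finset.mem_Icc]
  omega

lemma key (n k : ℕ) (hk : 1 ≤ k) (hn : 1 ≤ n) :
    ∀ M : ℕ, ∀ h : ℕ → ℕ,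
      (∑ i ∈ Finset.Icc 1 n, i * h i) < M →
      GenHess.IsGenHess n (Finset.Icc 1 (n - 1)) h →
      (∀ i ∈ Finset.Icc 1 n, min (i + k) n ≤ h i) →
    ∃ (ℓ : ℕ) (f : ℕ → (ℕ → ℕ)),
      f 0 = h ∧
      (∀ i ∈ Finset.Icc 1 n, f ℓ i = min (i + k) n) ∧
      (∀ t ≤ ℓ, GenHess.IsGenHess n (Finset.Icc 1 (n - 1)) (f t)) ∧
      ∀ t < ℓ,
        (∀ i ∈ Finset.Icc 1 n, min (i + k) n ≤ f t i) ∧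
        (∃ i ∈ Finset.Icc 1 n, f t i ≠ min (i + k) n) ∧
        ∃ jt, 1 ≤ jt ∧ jt < n - k ∧ f t jt = f t (jt + 1) ∧
          (∀ i, 1 ≤ i → i < jt → f t i ≠ f t (i + 1)) ∧
          ((Finset.Icc 1 n).filter (fun i => f t i = jt)).card ≤ 1 ∧
          f (t + 1) jt = f t jt - 1 ∧
          (∀ i ∈ Finset.Icc 1 n, i ≠ jt →
            (f t i = jt → f (t + 1) i = jt + 1) ∧
            (f t i ≠ jt → f (t + 1) i = f t i)) := by
  intro M
  induction M with
  | zero => intro h hM _ _; exact absurd hM (Nat.not_lt_zero _)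
  | succ M ih =>
    intro h hM hgen hge
    by_cases hdone : ∀ i ∈ Finset.Icc 1 n, h i = min (i + k) n
    · exact ⟨0, fun _ => h, rfl, hdone, fun t _ => hgen, fun t ht => absurd ht (Nat.not_lt_zero t)⟩
    push_neg at hdone
    obtain ⟨i0, hi0mem, hi0⟩ := hdone
    obtain ⟨-, hmaps, hle, hmono⟩ := hgen
    have hvx := mem_verts_iff n hn
    have hrange : ∀ x, 1 ≤ x → x ≤ n → 1 ≤ h x ∧ h x ≤ n := fun x h1 h2 =>
      (hvx _).mp (hmaps x ((hvx x).mpr ⟨h1, h2⟩))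
    have hlex : ∀ x, 1 ≤ x → x ≤ n → x ≤ h x := fun x h1 h2 =>
      hle x ((hvx x).mpr ⟨h1, h2⟩)
    have hmon : ∀ x y, 1 ≤ x → x ≤ y → y ≤ n → h x ≤ h y := fun x y h1 h2 h3 =>
      hmono x ((hvx x).mpr ⟨h1, by omega⟩) y ((hvx y).mpr ⟨by omega, h3⟩) h2
    have hi01 : 1 ≤ i0 := (Finset.mem_Icc.mp hi0mem).1
    have hi02 : i0 ≤ n := (Finset.mem_Icc.mp hi0mem).2
    have hi0n : h i0 ≤ n := (hrange i0 hi01 hi02).2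
    have hi0ge := hge i0 hi0mem
    have hi0k : i0 + k < n ∧ i0 + k < h i0 := by omega
    -- existence of a plateau
    have hplat : ∃ j, 1 ≤ j ∧ j + k < n ∧ h j = h (j + 1) := by
      by_contra hc
      push_neg at hc
      have claim : ∀ d, i0 + d + k ≤ n → i0 + k + 1 + d ≤ h (i0 + d) := by
        intro d
        induction d with
        | zero => intro _; simpa using by omega
        | succ d ihd =>
          intro hdn
          have h1 := ihd (by omega)
          have hne := hc (i0 + d) (by omega) (by omega)
          have hle2 := hmon (i0 + d) (i0 + d + 1) (by omega) (by omega) (by omega)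
          have he : i0 + (d + 1) = i0 + d + 1 := rfl
          rw [he]
          omega
      have c1 := claim (n - k - i0) (by omega)
      have hub := (hrange (i0 + (n - k - i0)) (by omega) (by omega)).2
      omega
    set jt := Nat.find hplat with hjtdef
    obtain ⟨hjt1, hjtk, hjteq⟩ : 1 ≤ jt ∧ jt + k < n ∧ h jt = h (jt + 1) := Nat.find_spec hplat
    have hjtmin : ∀ i, i < jt → ¬(1 ≤ i ∧ i + k < n ∧ h i = h (i + 1)) :=
      fun i hi => Nat.find_min hplat hi
    have hmin' : ∀ i, 1 ≤ i → i < jt → h i ≠ h (i + 1) :=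
      fun i h1 h2 heq => hjtmin i h2 ⟨h1, by omega, heq⟩
    have hjtub : jt + k + 1 ≤ h jt := by
      have := hge (jt + 1) (Finset.mem_Icc.mpr ⟨by omega, by omega⟩)
      omega
    have hjtn : h jt ≤ n := (hrange jt (by omega) (by omega)).2
    have hprelt : ∀ i, 1 ≤ i → i ≤ n → h i = jt → i < jt := by
      intro i h1 h2 he
      have := hlex i h1 h2
      rcases eq_or_lt_of_le (show i ≤ jt by omega) with rfl | h
      · omega
      · exact h
    have huniq : ∀ i1 i2, 1 ≤ i1 → i1 ≤ n → 1 ≤ i2 → i2 ≤ n →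
        h i1 = jt → h i2 = jt → i1 = i2 := by
      have aux : ∀ i1 i2, 1 ≤ i1 → i2 ≤ n → i1 < i2 → h i1 = jt → h i2 = jt → False := by
        intro i1 i2 h1 h2 hlt e1 e2
        have hi2lt : i2 < jt := hprelt i2 (by omega) h2 e2
        have m1 := hmon (i1 + 1) i2 (by omega) (by omega) h2
        have m2 := hmon i1 (i1 + 1) h1 (by omega) (by omega)
        exact hjtmin i1 (by omega) ⟨h1, by omega, by omega⟩
      intro i1 i2 a1 a2 b1 b2 e1 e2
      rcases lt_trichotomy i1 i2 with hlt | heq | hgt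
      · exact absurd (aux i1 i2 a1 b2 hlt e1 e2) (by simp)
      · exact heq
      · exact absurd (aux i2 i1 b1 a2 hgt e2 e1) (by simp)
    have hcard : ((Finset.Icc 1 n).filter (fun i => h i = jt)).card ≤ 1 := by
      apply Finset.card_le_one.mpr
      intro a ha b hb
      simp only [Finset.mem_filter, Finset.mem_Icc] at ha hb
      exact huniq a b ha.1.1 ha.1.2 hb.1.1 hb.1.2 ha.2 hb.2
    -- the modified function
    set h' : ℕ → ℕ := fun i => if i = jt then h jt - 1 else if h i = jt then jt + 1 else h i
      with h'def
    have h'jt : h' jt = h jt - 1 := by simp [h'def]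
    have h'eq : ∀ i, i ≠ jt → h i ≠ jt → h' i = h i := by
      intro i hi hhi; simp [h'def, hi, hhi]
    have h'pre : ∀ i, i ≠ jt → h i = jt → h' i = jt + 1 := by
      intro i hi hhi; simp [h'def, hi, hhi]
    have hstrict : ∀ i, 1 ≤ i → i < jt → h i < h jt := by
      intro i h1 h2
      have hle' := hmon i jt h1 (le_of_lt h2) (by omega)
      rcases lt_or_eq_of_le hle' with hlt | heq
      · exact hlt
      exfalso
      have e1 := hmon i (i + 1) h1 (by omega) (by omega)
      have e2 := hmon (i + 1) jt (by omega) (by omega) (by omega)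
      exact hmin' i h1 h2 (by omega)
    have hgtne : ∀ i, jt < i → i ≤ n → h i ≠ jt := by
      intro i hi h2
      have := hlex i (by omega) h2
      omega
    -- h' is a generalized Hessenberg function
    have hgen' : GenHess.IsGenHess n (Finset.Icc 1 (n - 1)) h' := by
      refine ⟨fun i hi => by simpa using Finset.mem_Icc.mp hi, ?_, ?_, ?_⟩
      · intro i hi
        obtain ⟨h1, h2⟩ := (hvx i).mp hi
        rw [hvx]
        by_cases c1 : i = jt
        · subst c1; rw [h'jt]; omega
        by_cases c2 : h i = jt
        · rw [h'pre i c1 c2]; omega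
        · rw [h'eq i c1 c2]; exact hrange i h1 h2
      · intro i hi
        obtain ⟨h1, h2⟩ := (hvx i).mp hi
        by_cases c1 : i = jt
        · subst c1; rw [h'jt]; omega
        by_cases c2 : h i = jt
        · rw [h'pre i c1 c2]
          have := hlex i h1 h2; omega
        · rw [h'eq i c1 c2]; exact hlex i h1 h2
      · intro i hi j hj hij
        obtain ⟨hi1, hi2⟩ := (hvx i).mp hi
        obtain ⟨hj1, hj2⟩ := (hvx j).mp hj
        rcases eq_or_lt_of_le hij with rfl | hlt
        · exact le_refl _
        by_cases ci : i = jt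
        · subst ci
          have hjne : h j ≠ jt := hgtne j hlt hj2
          have cj : j ≠ jt := by omega
          rw [h'jt, h'eq j cj hjne]
          have := hmon jt j hi1 (le_of_lt hlt) hj2
          omega
        by_cases cj : j = jt
        · subst cj
          rw [h'jt]
          by_cases ci2 : h i = jt
          · rw [h'pre i ci ci2]; omega
          · rw [h'eq i ci ci2]
            have := hstrict i hi1 hlt; omega
        by_cases ci2 : h i = jt
        · rw [h'pre i ci ci2]
          have hjne : h j ≠ jt := fun e => (by omega : i ≠ j) (huniq i j hi1 hi2 hj1 hj2 ci2 e)
          rw [h'eq j cj hjne]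
          have := hmon i j hi1 hij hj2
          omega
        rw [h'eq i ci ci2]
        by_cases cj2 : h j = jt
        · rw [h'pre j cj cj2]
          have := hmon i j hi1 hij hj2
          omega
        · rw [h'eq j cj cj2]
          exact hmon i j hi1 hij hj2
    -- h' ≥ h_k
    have hge' : ∀ i ∈ Finset.Icc 1 n, min (i + k) n ≤ h' i := by
      intro i hi
      obtain ⟨h1, h2⟩ := Finset.mem_Icc.mp hi
      have := hge i hi
      by_cases c1 : i = jt
      · subst c1; rw [h'jt]; omega
      by_cases c2 : h i = jt
      · rw [h'pre i c1 c2]; omega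
      · rw [h'eq i c1 c2]; omega
    -- measure decreases
    have hjtmem : jt ∈ Finset.Icc 1 n := Finset.mem_Icc.mpr ⟨by omega, by omega⟩
    have emul : jt * (h jt - 1) + jt = jt * h jt := by
      conv_rhs => rw [show h jt = (h jt - 1) + 1 by omega]
      ring
    have hmeas : ∑ i ∈ Finset.Icc 1 n, i * h' i < ∑ i ∈ Finset.Icc 1 n, i * h i := by
      by_cases hex : ∃ j' ∈ Finset.Icc 1 n, h j' = jt
      · obtain ⟨j', hj'mem, hj'eq⟩ := hex
        obtain ⟨b1, b2⟩ := Finset.mem_Icc.mp hj'mem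
        have hj'lt : j' < jt := hprelt j' b1 b2 hj'eq
        have hj'ne : j' ≠ jt := by omega
        have ej' : j' ∈ (Finset.Icc 1 n).erase jt := Finset.mem_erase.mpr ⟨hj'ne, hj'mem⟩
        have hsum : ∀ g : ℕ → ℕ,
            ∑ i ∈ Finset.Icc 1 n, i * g i =
            ∑ i ∈ ((Finset.Icc 1 n).erase jt).erase j', i * g i + j' * g j' + jt * g jt := by
          intro g
          rw [← Finset.sum_erase_add _ _ hjtmem, ← Finset.sum_erase_add _ _ ej']
        rw [hsum h', hsum h]
        have hdiff : ∑ i ∈ ((Finset.Icc 1 n).erase jt).erase j', i * h' i =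
            ∑ i ∈ ((Finset.Icc 1 n).erase jt).erase j', i * h i := by
          apply Finset.sum_congr rfl
          intro i hi
          simp only [Finset.mem_erase, Finset.mem_Icc] at hi
          have hne : h i ≠ jt := fun e =>
            hi.1 (huniq i j' hi.2.2.1 hi.2.2.2 b1 b2 e hj'eq)
          rw [h'eq i hi.2.1 hne]
        rw [hdiff, h'jt, h'pre j' hj'ne hj'eq]
        have e2 : j' * (jt + 1) = j' * jt + j' := by ring
        rw [hj'eq, e2]
        omega
      · push_neg at hex
        apply Finset.sum_lt_sum
        · intro i hi
          by_cases c1 : i = jt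
          · subst c1; rw [h'jt]
            exact Nat.mul_le_mul_left _ (by omega)
          · rw [h'eq i c1 (hex i hi)]
        · exact ⟨jt, hjtmem, by rw [h'jt]; omega⟩
    -- apply induction hypothesis
    obtain ⟨ℓ', f', hf0, hfend, hfgen, hfstep⟩ := ih h' (by omega) hgen' hge'
    refine ⟨ℓ' + 1, fun t => if t = 0 then h else f' (t - 1), rfl, ?_, ?_, ?_⟩
    · intro i hi
      simpa using hfend i hi
    · intro t ht
      match t with
      | 0 => simpa using ⟨(fun i hi => by simpa using Finset.mem_Icc.mp hi), hmaps, hle, hmono⟩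
      | s + 1 => simpa using hfgen s (by omega)
    · intro t ht
      match t with
      | 0 =>
        simp only [if_pos rfl, if_neg (Nat.one_ne_zero), Nat.sub_self, hf0]
        refine ⟨hge, ⟨i0, hi0mem, hi0⟩, jt, hjt1, by omega, hjteq, hmin', hcard, h'jt, ?_⟩
        intro i hi hine
        exact ⟨h'pre i hine, h'eq i hine⟩
      | s + 1 =>
        have := hfstep s (by omega)
        simpa using this

end GenHessAux


/-- Corollary 78 (termination of modifications): starting from any ordinary Hessenberg
function `h ≥ h_k` (where `h_k i = min (i+k) n`), the deterministic modification process
of the paper reaches `h_k` in finitely many steps. -/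
theorem modification_terminates (n k : ℕ) (hk : 1 ≤ k) (h : ℕ → ℕ)
    (hgen : IsGenHess n (Finset.Icc 1 (n - 1)) h)
    (hge : ∀ i ∈ Finset.Icc 1 n, min (i + k) n ≤ h i) :
    ∃ (ℓ : ℕ) (f : ℕ → (ℕ → ℕ)),
      f 0 = h ∧
      (∀ i ∈ Finset.Icc 1 n, f ℓ i = min (i + k) n) ∧
      (∀ t ≤ ℓ, IsGenHess n (Finset.Icc 1 (n - 1)) (f t)) ∧
      ∀ t < ℓ,
        (∀ i ∈ Finset.Icc 1 n, min (i + k) n ≤ f t i) ∧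
        (∃ i ∈ Finset.Icc 1 n, f t i ≠ min (i + k) n) ∧
        ∃ jt, 1 ≤ jt ∧ jt < n - k ∧ f t jt = f t (jt + 1) ∧
          (∀ i, 1 ≤ i → i < jt → f t i ≠ f t (i + 1)) ∧
          ((Finset.Icc 1 n).filter (fun i => f t i = jt)).card ≤ 1 ∧
          f (t + 1) jt = f t jt - 1 ∧
          (∀ i ∈ Finset.Icc 1 n, i ≠ jt →
            (f t i = jt → f (t + 1) i = jt + 1) ∧
            (f t i ≠ jt → f (t + 1) i = f t i)) := by
  rcases Nat.eq_zero_or_pos n with rfl | hn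
  · exact ⟨0, fun _ => h, rfl, by simp, fun t ht => by simpa [Nat.le_zero.mp ht] using hgen,
      fun t ht => absurd ht (Nat.not_lt_zero t)⟩
  · exact GenHessAux.key n k hk hn ((∑ i ∈ Finset.Icc 1 n, i * h i) + 1) h
      (Nat.lt_succ_self _) hgen hge
end

section
/- [Symmetry of the generalized chromatic quasisymmetric function] For every generalized Hessenberg function h ∈ H_{I,n} and every N ≥ 1, the polynomial csf_q^N(h) ∈ ℤ[q][x_1,…,x_N] is symmetric in the variables x_1,…,x_N: for every permutation σ of [N], applying σ to the variables leaves csf_q^N(h) unchanged. -/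
/-!
It suffices to show invariance under each adjacent transposition `(a b)`, `b = a + 1`, since
these generate the symmetric group. Call a vertex active if its colour set contains exactly one
of `a`, `b`, and give it the sign `+1` or `-1` accordingly. Adjacent active vertices carry
opposite signs. Since `h` is monotone, an edge `v < u` of `Γ_h` also joins `v` and `u` to every
vertex in between, and three pairwise adjacent active vertices cannot have pairwise opposite
signs; so no active vertex lies strictly between two adjacent active ones. Each connected
component of the graph on the active vertices is therefore a path through consecutive active
vertices, along which the signs alternate.

Exchanging `a` and `b` on the components of odd size is an involution on proper colourings.
It maps the monomial of a colouring to its image under `(a b)`, because the components of even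
size contain as many `a`'s as `b`'s. It preserves `asc`, because exchanging `a` and `b` only
changes the relative order of the pair `(a, b)`, and on a path with an odd number of vertices the
edges whose lower end holds `a` are as many as those whose lower end holds `b`.
-/

open Finset

namespace GenHess

theorem sum_eq_ite_odd_of_alternating {α : Type*} [LinearOrder α] (ε : α → ℤ) (C : Finset α)
    (hC : C.Nonempty)
    (halt : ∀ v ∈ C, ∀ u ∈ C, v < u → (∀ w ∈ C, ¬(v < w ∧ w < u)) → ε u = -ε v) :
    ∑ u ∈ C, ε u = if Odd #C then ε (C.min' hC) else 0 := by
  classical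
  induction C using Finset.induction_on_min with
  | empty => exact absurd hC Finset.not_nonempty_empty
  | insert m C hm ih =>
    have hmC : m ∉ C := fun h => lt_irrefl m (hm m h)
    rw [sum_insert hmC, card_insert_of_notMem hmC]
    rcases C.eq_empty_or_nonempty with rfl | hne
    · simp
    have hmin : (insert m C).min' hC = m :=
      le_antisymm (min'_le _ _ (mem_insert_self m C))
        (le_min' _ _ _ fun x hx => (mem_insert.mp hx).elim ge_of_eq fun hx => (hm x hx).le)
    have hnext : ε (C.min' hne) = -ε m := by
      refine halt m (mem_insert_self m C) _ (mem_insert_of_mem (C.min'_mem hne))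
        (hm _ (C.min'_mem hne)) fun w hw ⟨hmw, hwC⟩ => ?_
      rcases mem_insert.mp hw with rfl | hw
      · exact lt_irrefl w hmw
      · exact (C.min'_le w hw).not_gt hwC
    have halt' : ∀ v ∈ C, ∀ u ∈ C, v < u → (∀ w ∈ C, ¬(v < w ∧ w < u)) → ε u = -ε v := by
      refine fun v hv u hu hvu hgap => halt v (mem_insert_of_mem hv) u (mem_insert_of_mem hu)
        hvu fun w hw ⟨hvw, hwu⟩ => ?_
      rcases mem_insert.mp hw with rfl | hw
      · exact (hm v hv).not_gt hvw
      · exact hgap w hw ⟨hvw, hwu⟩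
    rw [ih hne halt', hmin, hnext]
    by_cases hodd : Odd #C <;> simp [hodd, Nat.odd_add_one]

theorem mem_of_reachable {V : Type*} {G : SimpleGraph V} {s : Set V}
    (hs : ∀ ⦃v u⦄, G.Adj v u → v ∈ s) {r u : V} (hr : r ∈ s) (hru : G.Reachable r u) : u ∈ s := by
  rw [SimpleGraph.reachable_iff_reflTransGen] at hru
  induction hru with
  | refl => exact hr
  | tail _ hadj _ => exact hs hadj.symm

section ConsecutiveGraph

variable {α : Type*} [LinearOrder α] {G : SimpleGraph α} {s : Set α}

/-- A walk from below `v` to above `u` has to cross the gap between `v` and `u`. -/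
theorem adj_of_reachable_of_consecutive (hs : ∀ ⦃v u⦄, G.Adj v u → v ∈ s)
    (hskip : ∀ ⦃v w u⦄, G.Adj v u → v < w → w < u → w ∉ s) {x y v u : α}
    (hxy : G.Reachable x y) (hxv : x ≤ v) (hvu : v < u) (huy : u ≤ y) (hv : v ∈ s) (hu : u ∈ s)
    (hgap : ∀ w ∈ s, ¬(v < w ∧ w < u)) : G.Adj v u := by
  obtain ⟨p⟩ := hxy
  obtain ⟨d, -, hd₁, hd₂⟩ :=
    p.exists_boundary_dart {w | w ≤ v} hxv (by simpa using hvu.trans_le huy)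
  simp only [Set.mem_ofPred_eq, not_le] at hd₁ hd₂
  have hfst : d.fst = v := by
    by_contra hne
    exact hskip d.adj (lt_of_le_of_ne hd₁ hne) hd₂ hv
  have hsnd : d.snd = u := by
    rcases lt_trichotomy d.snd u with hlt | heq | hgt
    · exact absurd ⟨hd₂, hlt⟩ (hgap _ (hs d.adj.symm))
    · exact heq
    · exact absurd hu (hskip d.adj (hfst ▸ hvu) hgt)
  simpa [hfst, hsnd] using d.adj

variable [Fintype α]

open Classical in
theorem adj_of_mem_reachable_of_consecutive (hs : ∀ ⦃v u⦄, G.Adj v u → v ∈ s)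
    (hskip : ∀ ⦃v w u⦄, G.Adj v u → v < w → w < u → w ∉ s) {r v u : α}
    (hv : v ∈ univ.filter (G.Reachable r)) (hu : u ∈ univ.filter (G.Reachable r))
    (hvs : v ∈ s) (hus : u ∈ s) (hvu : v < u)
    (hgap : ∀ w ∈ univ.filter (G.Reachable r), ¬(v < w ∧ w < u)) : G.Adj v u := by
  simp only [mem_filter, mem_univ, true_and] at hv hu hgap
  set T := univ.filter fun w => w ∈ s ∧ v ≤ w ∧ w < u
  have hT : T.Nonempty := ⟨v, by simp [T, hvs, hvu]⟩
  obtain ⟨hps, hvp, hpu⟩ : T.max' hT ∈ s ∧ v ≤ T.max' hT ∧ T.max' hT < u := by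
    simpa [T] using T.max'_mem hT
  have hadj : G.Adj (T.max' hT) u :=
    adj_of_reachable_of_consecutive hs hskip (hv.symm.trans hu) hvp hpu le_rfl hps hus
      fun w hws ⟨hpw, hwu⟩ =>
        (T.le_max' w (by simp [T, hws, (hvp.trans_lt hpw).le, hwu])).not_gt hpw
  have hpv : T.max' hT = v := by
    by_contra hne
    exact hgap _ (hu.trans hadj.symm.reachable) ⟨lt_of_le_of_ne hvp (Ne.symm hne), hpu⟩
  exact hpv ▸ hadj

open Classical in
theorem card_lower_adj (hs : ∀ ⦃v u⦄, G.Adj v u → v ∈ s)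
    (hskip : ∀ ⦃v w u⦄, G.Adj v u → v < w → w < u → w ∉ s) {r u : α} (hr : r ∈ s)
    (hu : u ∈ univ.filter (G.Reachable r)) :
    #{v | G.Adj v u ∧ v < u} =
      if u = (univ.filter (G.Reachable r)).min' ⟨r, by simp⟩ then 0 else 1 := by
  set C := univ.filter (G.Reachable r)
  have hC : ∀ {v}, G.Adj v u → v ∈ C := fun hvu => by
    simpa [C] using (mem_filter.mp hu).2.trans hvu.symm.reachable
  split_ifs with hmin
  · refine card_eq_zero.mpr (filter_eq_empty_iff.mpr fun v _ ⟨hvu, hlt⟩ => ?_)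
    exact (C.min'_le v (hC hvu)).not_gt (hmin ▸ hlt)
  set T := C.filter (· < u)
  have hT : T.Nonempty :=
    ⟨_, mem_filter.mpr ⟨C.min'_mem _, lt_of_le_of_ne (C.min'_le u hu) (Ne.symm hmin)⟩⟩
  obtain ⟨hpC, hpu⟩ := mem_filter.mp (T.max'_mem hT)
  have hps : T.max' hT ∈ s := mem_of_reachable hs hr (mem_filter.mp hpC).2
  have hadj : G.Adj (T.max' hT) u :=
    adj_of_mem_reachable_of_consecutive hs hskip hpC hu hps
      (mem_of_reachable hs hr (mem_filter.mp hu).2) hpu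
      fun w hw ⟨hpw, hwu⟩ => (T.le_max' w (mem_filter.mpr ⟨hw, hwu⟩)).not_gt hpw
  refine card_eq_one.mpr ⟨T.max' hT, eq_singleton_iff_unique_mem.mpr ⟨by simp [hadj, hpu], ?_⟩⟩
  intro v hv
  obtain ⟨hvu, hlt⟩ := (mem_filter.mp hv).2
  exact (T.le_max' v (mem_filter.mpr ⟨hC hvu, hlt⟩)).eq_or_lt.resolve_right fun hvp =>
    hskip hvu hvp hpu hps

open Classical in
theorem sum_eq_zero_of_sum_component_eq_zero {M : Type*} [AddCommMonoid M] (S : Finset α)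
    (hS : ∀ v ∈ S, ∀ u, G.Reachable v u → u ∈ S) (f : α → M)
    (hf : ∀ r ∈ S, ∑ u ∈ univ.filter (G.Reachable r), f u = 0) : ∑ u ∈ S, f u = 0 := by
  refine sum_cancels_of_partition_cancels G.reachableSetoid fun r hr => ?_
  convert hf r hr using 2
  ext u
  simp only [mem_filter, mem_univ, true_and]
  exact ⟨fun h => h.2.symm, fun h => ⟨hS r hr u h, h.symm⟩⟩

end ConsecutiveGraph

section SwapColours

theorem prod_prod_eq_prod_pow_card {ι κ M : Type*} [CommMonoid M] [Fintype κ] [DecidableEq κ]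
    (S : Finset ι) (A : ι → Finset κ) (f : κ → M) :
    ∏ v ∈ S, ∏ x ∈ A v, f x = ∏ x, f x ^ #{v ∈ S | x ∈ A v} := by
  calc ∏ v ∈ S, ∏ x ∈ A v, f x = ∏ v ∈ S, ∏ x, if x ∈ A v then f x else 1 := by
        simp_rw [prod_ite_mem, univ_inter]
    _ = ∏ x, f x ^ #{v ∈ S | x ∈ A v} := by
        rw [prod_comm]
        simp_rw [← prod_filter, prod_const]

theorem prod_prod_swap_of_card_eq {ι κ M : Type*} [CommMonoid M] [Fintype κ] [DecidableEq κ]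
    (S : Finset ι) (A : ι → Finset κ) (f : κ → M) {a b : κ}
    (hab : #{v ∈ S | a ∈ A v} = #{v ∈ S | b ∈ A v}) :
    ∏ v ∈ S, ∏ x ∈ A v, f (Equiv.swap a b x) = ∏ v ∈ S, ∏ x ∈ A v, f x := by
  have hswap : ∀ x, #{v ∈ S | Equiv.swap a b x ∈ A v} = #{v ∈ S | x ∈ A v} := fun x => by
    rcases eq_or_ne x a with rfl | hxa
    · rw [Equiv.swap_apply_left, hab]
    rcases eq_or_ne x b with rfl | hxb
    · rw [Equiv.swap_apply_right, hab]
    · rw [Equiv.swap_apply_of_ne_of_ne hxa hxb]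
  rw [prod_prod_eq_prod_pow_card, prod_prod_eq_prod_pow_card,
    ← Equiv.prod_comp (Equiv.swap a b) fun x => f x ^ #{v ∈ S | x ∈ A v}]
  exact prod_congr rfl fun x _ => by rw [hswap]

variable {N : ℕ} {a b : Fin N}

theorem boole_swap_lt_sub_boole_lt (hab : (a : ℕ) + 1 = b) (x y : Fin N) :
    ((if Equiv.swap a b x < Equiv.swap a b y then 1 else 0 : ℤ) - if x < y then 1 else 0) =
      (if (x, y) = (b, a) then 1 else 0) - if (x, y) = (a, b) then 1 else 0 := by
  simp only [Equiv.swap_apply_def, Prod.mk.injEq, Fin.ext_iff, Fin.lt_def]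
  split_ifs <;> omega

def ascCount (A B : Finset (Fin N)) : ℕ := #{p ∈ A ×ˢ B | p.1 < p.2}

theorem ascCount_map_swap (hab : (a : ℕ) + 1 = b) (A B : Finset (Fin N)) :
    (ascCount (A.map (Equiv.swap a b).toEmbedding) (B.map (Equiv.swap a b).toEmbedding) : ℤ) =
      ascCount A B + ((if b ∈ A ∧ a ∈ B then 1 else 0) - if a ∈ A ∧ b ∈ B then 1 else 0) := by
  have hmap : ascCount (A.map (Equiv.swap a b).toEmbedding) (B.map (Equiv.swap a b).toEmbedding)
      = #{p ∈ A ×ˢ B | Equiv.swap a b p.1 < Equiv.swap a b p.2} := by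
    rw [ascCount, ← prodMap_map_product, filter_map, card_map]
    rfl
  rw [hmap, ascCount, natCast_card_filter, natCast_card_filter, ← sub_eq_iff_eq_add',
    ← sum_sub_distrib]
  simp_rw [boole_swap_lt_sub_boole_lt hab]
  rw [sum_sub_distrib, sum_ite_eq', sum_ite_eq']
  simp only [mem_product]

def abSign (a b : Fin N) (A : Finset (Fin N)) : ℤ :=
  (if a ∈ A then 1 else 0) - if b ∈ A then 1 else 0

theorem abSign_ne_zero {A : Finset (Fin N)} (hA : Xor (a ∈ A) (b ∈ A)) : abSign a b A ≠ 0 := by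
  rcases hA with ⟨ha, hb⟩ | ⟨hb, ha⟩ <;> simp [abSign, ha, hb]

theorem abSign_eq_zero {A : Finset (Fin N)} (hA : ¬Xor (a ∈ A) (b ∈ A)) : abSign a b A = 0 := by
  by_cases ha : a ∈ A <;> by_cases hb : b ∈ A <;> simp_all [abSign, Xor]

theorem abSign_eq_neg_of_disjoint {A B : Finset (Fin N)} (hAB : Disjoint A B)
    (hA : Xor (a ∈ A) (b ∈ A)) (hB : Xor (a ∈ B) (b ∈ B)) : abSign a b B = -abSign a b A := by
  have : a ∈ A → a ∉ B := fun h => disjoint_left.mp hAB h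
  have : b ∈ A → b ∉ B := fun h => disjoint_left.mp hAB h
  rcases hA with ⟨ha, hb⟩ | ⟨hb, ha⟩ <;> rcases hB with ⟨ha', hb'⟩ | ⟨hb', ha'⟩ <;>
    simp_all [abSign]

theorem boole_sub_boole_eq_abSign_of_disjoint {A B : Finset (Fin N)} (hAB : Disjoint A B)
    (hB : Xor (a ∈ B) (b ∈ B)) :
    ((if b ∈ A ∧ a ∈ B then 1 else 0 : ℤ) - if a ∈ A ∧ b ∈ B then 1 else 0) =
      if Xor (a ∈ A) (b ∈ A) then abSign a b B else 0 := by
  have : a ∈ A → a ∉ B := fun h => disjoint_left.mp hAB h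
  have : b ∈ A → b ∉ B := fun h => disjoint_left.mp hAB h
  by_cases ha : a ∈ A <;> by_cases hb : b ∈ A <;> rcases hB with ⟨ha', hb'⟩ | ⟨hb', ha'⟩ <;>
    simp_all [abSign, Xor]

theorem map_swap_eq_self {A : Finset (Fin N)} (ha : a ∉ A) (hb : b ∉ A) :
    A.map (Equiv.swap a b).toEmbedding = A := by
  ext x
  rw [mem_map_equiv, Equiv.symm_swap]
  rcases eq_or_ne x a with rfl | hxa
  · simp [ha, hb]
  rcases eq_or_ne x b with rfl | hxb
  · simp [ha, hb]
  rw [Equiv.swap_apply_of_ne_of_ne hxa hxb]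

theorem xor_mem_map_swap (A : Finset (Fin N)) :
    Xor (a ∈ A.map (Equiv.swap a b).toEmbedding) (b ∈ A.map (Equiv.swap a b).toEmbedding) ↔
      Xor (a ∈ A) (b ∈ A) := by
  simp [mem_map_equiv, _root_.xor_comm (b ∈ A)]

end SwapColours

noncomputable section Colourings

open scoped Classical

abbrev Vert (n : ℕ) (I : Finset ℕ) : Type := {x // x ∈ verts n I}

abbrev IsEdge {n : ℕ} {I : Finset ℕ} (h : ℕ → ℕ) (v u : Vert n I) : Prop :=
  v.val < u.val ∧ u.val ≤ h v.val

variable {n : ℕ} {I : Finset ℕ} {h : ℕ → ℕ} {N : ℕ} {a b : Fin N}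
  {γ : Vert n I → Finset (Fin N)}

def activeGraph (h : ℕ → ℕ) (a b : Fin N) (γ : Vert n I → Finset (Fin N)) :
    SimpleGraph (Vert n I) :=
  SimpleGraph.fromRel fun v u => Xor (a ∈ γ v) (b ∈ γ v) ∧ Xor (a ∈ γ u) (b ∈ γ u) ∧ IsEdge h v u

def component (h : ℕ → ℕ) (a b : Fin N) (γ : Vert n I → Finset (Fin N)) (v : Vert n I) :
    Finset (Vert n I) :=
  univ.filter ((activeGraph h a b γ).Reachable v)

def IsFlipped (h : ℕ → ℕ) (a b : Fin N) (γ : Vert n I → Finset (Fin N)) (v : Vert n I) : Prop :=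
  Xor (a ∈ γ v) (b ∈ γ v) ∧ Odd #(component h a b γ v)

def flipOddComponents (h : ℕ → ℕ) (a b : Fin N) (γ : Vert n I → Finset (Fin N)) :
    Vert n I → Finset (Fin N) := fun v =>
  if IsFlipped h a b γ v then (γ v).map (Equiv.swap a b).toEmbedding else γ v

theorem xor_of_activeGraph_adj {v u : Vert n I} (hvu : (activeGraph h a b γ).Adj v u) :
    Xor (a ∈ γ v) (b ∈ γ v) := by
  obtain ⟨-, ⟨hv, -⟩ | ⟨-, hv, -⟩⟩ := hvu <;> assumption

theorem isEdge_of_activeGraph_adj {v u : Vert n I} (hvu : (activeGraph h a b γ).Adj v u)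
    (hlt : v < u) : IsEdge h v u := by
  obtain ⟨-, ⟨-, -, he⟩ | ⟨-, -, he⟩⟩ := hvu
  · exact he
  · exact absurd he.1 (not_lt.mpr hlt.le)

theorem activeGraph_adj_and_lt_iff {v u : Vert n I} (hu : Xor (a ∈ γ u) (b ∈ γ u)) :
    (activeGraph h a b γ).Adj v u ∧ v < u ↔ IsEdge h v u ∧ Xor (a ∈ γ v) (b ∈ γ v) :=
  ⟨fun ⟨hadj, hlt⟩ => ⟨isEdge_of_activeGraph_adj hadj hlt, xor_of_activeGraph_adj hadj⟩,
    fun ⟨he, hv⟩ =>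
      ⟨(SimpleGraph.fromRel_adj _ _ _).mpr ⟨ne_of_lt he.1, Or.inl ⟨hv, hu, he⟩⟩, he.1⟩⟩

theorem abSign_eq_neg_of_activeGraph_adj (hp : IsProper n I h γ) {v u : Vert n I}
    (hvu : (activeGraph h a b γ).Adj v u) : abSign a b (γ u) = -abSign a b (γ v) := by
  refine abSign_eq_neg_of_disjoint ?_ (xor_of_activeGraph_adj hvu) (xor_of_activeGraph_adj hvu.symm)
  obtain ⟨-, ⟨-, -, he⟩ | ⟨-, -, he⟩⟩ := hvu
  · exact hp.2 v u he.1 he.2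
  · exact (hp.2 u v he.1 he.2).symm

theorem not_xor_of_activeGraph_adj_of_lt_of_lt (hgen : IsGenHess n I h) (hp : IsProper n I h γ)
    {v w u : Vert n I} (hvu : (activeGraph h a b γ).Adj v u) (hvw : v < w) (hwu : w < u) :
    ¬Xor (a ∈ γ w) (b ∈ γ w) := by
  intro hw
  have hv := xor_of_activeGraph_adj hvu
  have he := isEdge_of_activeGraph_adj hvu (hvw.trans hwu)
  have hvw' : (activeGraph h a b γ).Adj v w :=
    ((activeGraph_adj_and_lt_iff hw).mpr ⟨⟨hvw, (show (w : ℕ) ≤ u from hwu.le).trans he.2⟩, hv⟩).1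
  have hwu' : (activeGraph h a b γ).Adj w u :=
    ((activeGraph_adj_and_lt_iff (xor_of_activeGraph_adj hvu.symm)).mpr
      ⟨⟨hwu, he.2.trans (hgen.2.2.2 v v.2 w w.2 hvw.le)⟩, hw⟩).1
  have h₁ := abSign_eq_neg_of_activeGraph_adj hp hvu
  have h₂ := abSign_eq_neg_of_activeGraph_adj hp hvw'
  have h₃ := abSign_eq_neg_of_activeGraph_adj hp hwu'
  exact abSign_ne_zero hv (by linarith)

theorem xor_flipOddComponents (v : Vert n I) :
    Xor (a ∈ flipOddComponents h a b γ v) (b ∈ flipOddComponents h a b γ v) ↔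
      Xor (a ∈ γ v) (b ∈ γ v) := by
  unfold flipOddComponents
  split_ifs
  · exact xor_mem_map_swap _
  · rfl

theorem activeGraph_flipOddComponents :
    activeGraph h a b (flipOddComponents h a b γ) = activeGraph h a b γ := by
  ext v u
  simp only [activeGraph, SimpleGraph.fromRel_adj, xor_flipOddComponents]

theorem isFlipped_flipOddComponents (v : Vert n I) :
    IsFlipped h a b (flipOddComponents h a b γ) v ↔ IsFlipped h a b γ v := by
  simp only [IsFlipped, component, activeGraph_flipOddComponents, xor_flipOddComponents]

theorem flipOddComponents_involutive :
    flipOddComponents h a b (flipOddComponents h a b γ) = γ := by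
  funext v
  by_cases hv : IsFlipped h a b γ v
  · ext x
    simp [flipOddComponents, isFlipped_flipOddComponents, hv, mem_map_equiv]
  · simp [flipOddComponents, isFlipped_flipOddComponents, hv]

theorem mem_component_self (v : Vert n I) : v ∈ component h a b γ v := by
  simp [component]

theorem xor_of_reachable {v u : Vert n I} (hv : Xor (a ∈ γ v) (b ∈ γ v))
    (hvu : (activeGraph h a b γ).Reachable v u) : Xor (a ∈ γ u) (b ∈ γ u) :=
  mem_of_reachable (s := {w | Xor (a ∈ γ w) (b ∈ γ w)}) (fun _ _ => xor_of_activeGraph_adj) hv hvu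

theorem isFlipped_of_reachable {v u : Vert n I} (hv : IsFlipped h a b γ v)
    (hvu : (activeGraph h a b γ).Reachable v u) : IsFlipped h a b γ u := by
  refine ⟨xor_of_reachable hv.1 hvu, ?_⟩
  have hcomp : component h a b γ v = component h a b γ u := by
    ext w
    simp only [component, mem_filter, mem_univ, true_and]
    exact ⟨hvu.symm.trans, hvu.trans⟩
  exact hcomp ▸ hv.2

theorem sum_abSign_component (hgen : IsGenHess n I h) (hp : IsProper n I h γ) {r : Vert n I}
    (hr : Xor (a ∈ γ r) (b ∈ γ r)) :
    ∑ u ∈ component h a b γ r, abSign a b (γ u) =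
      if Odd #(component h a b γ r) then
        abSign a b (γ ((component h a b γ r).min' ⟨r, mem_component_self r⟩))
      else 0 :=
  sum_eq_ite_odd_of_alternating _ _ _ fun _ hv _ hu hvu hgap =>
    abSign_eq_neg_of_activeGraph_adj hp <|
      adj_of_mem_reachable_of_consecutive (s := {w | Xor (a ∈ γ w) (b ∈ γ w)})
        (fun _ _ => xor_of_activeGraph_adj)
        (fun _ _ _ => not_xor_of_activeGraph_adj_of_lt_of_lt hgen hp) hv hu
        (xor_of_reachable hr (mem_filter.mp hv).2) (xor_of_reachable hr (mem_filter.mp hu).2)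
        hvu hgap

theorem notMem_of_isFlipped_of_not_isFlipped (hp : IsProper n I h γ) {v u : Vert n I}
    (he : IsEdge h v u ∨ IsEdge h u v) (hv : IsFlipped h a b γ v) (hu : ¬IsFlipped h a b γ u) :
    a ∉ γ u ∧ b ∉ γ u := by
  have hd : Disjoint (γ v) (γ u) :=
    he.elim (fun he => hp.2 v u he.1 he.2) fun he => (hp.2 u v he.1 he.2).symm
  have hxu : ¬Xor (a ∈ γ u) (b ∈ γ u) := fun hxu => hu <| isFlipped_of_reachable hv <|
    SimpleGraph.Adj.reachable <| (SimpleGraph.fromRel_adj _ _ _).mpr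
      ⟨he.elim (fun he => ne_of_lt he.1) fun he => ne_of_gt he.1,
        he.imp (fun he => ⟨hv.1, hxu, he⟩) fun he => ⟨hxu, hv.1, he⟩⟩
  have ha : a ∈ γ v → a ∉ γ u := fun h => disjoint_left.mp hd h
  have hb : b ∈ γ v → b ∉ γ u := fun h => disjoint_left.mp hd h
  simp only [Xor, not_or, not_and, not_not] at hxu
  rcases hv.1 with ⟨hav, -⟩ | ⟨hbv, -⟩
  · exact ⟨ha hav, fun hbu => ha hav (hxu.2 hbu)⟩
  · exact ⟨fun hau => hb hbv (hxu.1 hau), hb hbv⟩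

theorem flipOddComponents_of_isEdge (hp : IsProper n I h γ) {v u : Vert n I}
    (he : IsEdge h v u ∨ IsEdge h u v) (hf : IsFlipped h a b γ v ∨ IsFlipped h a b γ u) :
    flipOddComponents h a b γ u = (γ u).map (Equiv.swap a b).toEmbedding := by
  by_cases hu : IsFlipped h a b γ u
  · rw [flipOddComponents, if_pos hu]
  · obtain ⟨ha, hb⟩ := notMem_of_isFlipped_of_not_isFlipped hp he (hf.resolve_right hu) hu
    rw [flipOddComponents, if_neg hu, map_swap_eq_self ha hb]

theorem isProper_flipOddComponents (hp : IsProper n I h γ) :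
    IsProper n I h (flipOddComponents h a b γ) := by
  refine ⟨fun v => ?_, fun v u hvu huv => ?_⟩
  · unfold flipOddComponents
    split_ifs
    · rw [card_map, hp.1 v]
    · exact hp.1 v
  by_cases hf : IsFlipped h a b γ v ∨ IsFlipped h a b γ u
  · rw [flipOddComponents_of_isEdge hp (Or.inr ⟨hvu, huv⟩) hf.symm,
      flipOddComponents_of_isEdge hp (Or.inl ⟨hvu, huv⟩) hf]
    exact (disjoint_map _).mpr (hp.2 v u hvu huv)
  · rw [not_or] at hf
    rw [flipOddComponents, if_neg hf.1, flipOddComponents, if_neg hf.2]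
    exact hp.2 v u hvu huv

theorem sum_abSign_not_isFlipped (hgen : IsGenHess n I h) (hp : IsProper n I h γ) :
    ∑ v ∈ univ.filter (¬IsFlipped h a b γ ·), abSign a b (γ v) = 0 := by
  rw [← sum_filter_of_ne (p := fun v => Xor (a ∈ γ v) (b ∈ γ v))
    fun v _ hv => not_not.mp (mt abSign_eq_zero hv)]
  refine sum_eq_zero_of_sum_component_eq_zero (G := activeGraph h a b γ) _
    (fun v hv u hvu => ?_) _ fun r hr => ?_
  · obtain ⟨⟨-, hv⟩, hxv⟩ := mem_filter.mp hv |>.imp_left mem_filter.mp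
    exact mem_filter.mpr ⟨mem_filter.mpr ⟨mem_univ u,
      fun hu => hv (isFlipped_of_reachable hu hvu.symm)⟩, xor_of_reachable hxv hvu⟩
  · obtain ⟨⟨-, hr⟩, hxr⟩ := mem_filter.mp hr |>.imp_left mem_filter.mp
    exact (sum_abSign_component hgen hp hxr).trans (if_neg fun hodd => hr ⟨hxr, hodd⟩)

theorem rename_swap_prod_X (hgen : IsGenHess n I h) (hp : IsProper n I h γ) :
    MvPolynomial.rename (Equiv.swap a b)
        (∏ v, ∏ x ∈ γ v, (MvPolynomial.X x : MvPolynomial (Fin N) ℤ)) =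
      ∏ v, ∏ x ∈ flipOddComponents h a b γ v, MvPolynomial.X x := by
  simp only [map_prod, MvPolynomial.rename_X]
  rw [← prod_filter_mul_prod_filter_not univ (IsFlipped h a b γ),
    ← prod_filter_mul_prod_filter_not univ (IsFlipped h a b γ)
      fun v => ∏ x ∈ flipOddComponents h a b γ v, _]
  congr 1
  · refine prod_congr rfl fun v hv => ?_
    rw [flipOddComponents, if_pos (mem_filter.mp hv).2, prod_map]
    rfl
  · refine (prod_prod_swap_of_card_eq _ _ _ ?_).trans (prod_congr rfl fun v hv => ?_)
    · have hsum := sum_abSign_not_isFlipped (a := a) (b := b) hgen hp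
      simp only [abSign, sum_sub_distrib, sum_boole] at hsum
      exact_mod_cast sub_eq_zero.mp hsum
    · rw [flipOddComponents, if_neg (mem_filter.mp hv).2]

theorem ascCount_flipOddComponents (hab : (a : ℕ) + 1 = b) (hp : IsProper n I h γ)
    {v u : Vert n I} (he : IsEdge h v u) :
    (ascCount (flipOddComponents h a b γ v) (flipOddComponents h a b γ u) : ℤ) =
      ascCount (γ v) (γ u) +
        if IsFlipped h a b γ u ∧ Xor (a ∈ γ v) (b ∈ γ v) then abSign a b (γ u) else 0 := by
  by_cases hf : IsFlipped h a b γ v ∨ IsFlipped h a b γ u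
  · rw [flipOddComponents_of_isEdge hp (Or.inr he) hf.symm,
      flipOddComponents_of_isEdge hp (Or.inl he) hf, ascCount_map_swap hab]
    by_cases hu : IsFlipped h a b γ u
    · rw [boole_sub_boole_eq_abSign_of_disjoint (hp.2 v u he.1 he.2) hu.1]
      simp [hu]
    · obtain ⟨ha, hb⟩ :=
        notMem_of_isFlipped_of_not_isFlipped hp (Or.inl he) (hf.resolve_right hu) hu
      simp [ha, hb, hu]
  · rw [not_or] at hf
    rw [flipOddComponents, if_neg hf.1, flipOddComponents, if_neg hf.2]
    simp [hf.2]

theorem sum_abSign_mul_card_lower_isFlipped (hgen : IsGenHess n I h) (hp : IsProper n I h γ) :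
    ∑ u ∈ univ.filter (IsFlipped h a b γ),
      abSign a b (γ u) * #{v | (activeGraph h a b γ).Adj v u ∧ v < u} = 0 := by
  refine sum_eq_zero_of_sum_component_eq_zero _
    (fun v hv u hvu => by simpa using isFlipped_of_reachable (mem_filter.mp hv).2 hvu) _
    fun r hr => ?_
  obtain ⟨hxr, hodd⟩ := (mem_filter.mp hr).2
  set m := (component h a b γ r).min' ⟨r, mem_component_self r⟩
  have hlower : ∀ u ∈ component h a b γ r,
      #{v | (activeGraph h a b γ).Adj v u ∧ v < u} = if u = m then 0 else 1 :=
    fun u hu => card_lower_adj (s := {w | Xor (a ∈ γ w) (b ∈ γ w)})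
      (fun _ _ => xor_of_activeGraph_adj)
      (fun _ _ _ => not_xor_of_activeGraph_adj_of_lt_of_lt hgen hp) hxr hu
  calc ∑ u ∈ component h a b γ r,
        abSign a b (γ u) * #{v | (activeGraph h a b γ).Adj v u ∧ v < u}
      = ∑ u ∈ component h a b γ r, (abSign a b (γ u) - if u = m then abSign a b (γ u) else 0) :=
        sum_congr rfl fun u hu => by rw [hlower u hu]; split_ifs <;> simp
    _ = 0 := by
        rw [sum_sub_distrib, sum_ite_eq', if_pos (min'_mem _ _ : m ∈ _),
          sum_abSign_component hgen hp hxr, if_pos hodd, sub_self]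

theorem sum_isEdge_abSign_isFlipped (hgen : IsGenHess n I h) (hp : IsProper n I h γ) :
    ∑ v, ∑ u, (if IsEdge h v u then
      if IsFlipped h a b γ u ∧ Xor (a ∈ γ v) (b ∈ γ v) then abSign a b (γ u) else 0
      else 0 : ℤ) = 0 := by
  refine sum_comm.trans
    (Eq.trans ?_ (sum_abSign_mul_card_lower_isFlipped (a := a) (b := b) hgen hp))
  rw [sum_filter]
  refine sum_congr rfl fun u _ => ?_
  by_cases hu : IsFlipped h a b γ u
  · rw [if_pos hu, natCast_card_filter, mul_sum]
    refine sum_congr rfl fun v _ => ?_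
    simp only [activeGraph_adj_and_lt_iff hu.1]
    by_cases hev : IsEdge h v u ∧ Xor (a ∈ γ v) (b ∈ γ v)
    · rw [if_pos hev.1, if_pos ⟨hu, hev.2⟩, if_pos hev, mul_one]
    · rw [if_neg hev, mul_zero]
      split_ifs with he hv
      exacts [absurd ⟨he, hv.2⟩ hev, rfl, rfl]
  · rw [if_neg hu]
    refine sum_eq_zero fun v _ => ?_
    split_ifs with he hv
    exacts [absurd hv.1 hu, rfl, rfl]

theorem natCast_asc (γ : Vert n I → Finset (Fin N)) :
    (asc n I h γ : ℤ) = ∑ v, ∑ u, if IsEdge h v u then (ascCount (γ v) (γ u) : ℤ) else 0 := by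
  simp only [asc, ascCount, Nat.cast_sum, Nat.cast_ite, Nat.cast_zero]

theorem asc_flipOddComponents (hab : (a : ℕ) + 1 = b) (hgen : IsGenHess n I h)
    (hp : IsProper n I h γ) : asc n I h (flipOddComponents h a b γ) = asc n I h γ := by
  have hint : (asc n I h (flipOddComponents h a b γ) : ℤ) = asc n I h γ := by
    calc (asc n I h (flipOddComponents h a b γ) : ℤ)
        = ∑ v, ∑ u, ((if IsEdge h v u then (ascCount (γ v) (γ u) : ℤ) else 0) +
            if IsEdge h v u then
              if IsFlipped h a b γ u ∧ Xor (a ∈ γ v) (b ∈ γ v) then abSign a b (γ u) else 0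
            else 0) := by
          rw [natCast_asc]
          refine sum_congr rfl fun v _ => sum_congr rfl fun u _ => ?_
          by_cases he : IsEdge h v u
          · simp only [if_pos he, ascCount_flipOddComponents hab hp he]
          · simp only [if_neg he, add_zero]
      _ = asc n I h γ := by
          simp only [sum_add_distrib, sum_isEdge_abSign_isFlipped hgen hp, add_zero, natCast_asc]
  exact_mod_cast hint

theorem map_rename_swap_csf (hab : (a : ℕ) + 1 = b) (hgen : IsGenHess n I h) :
    (csf n I h N).map (MvPolynomial.rename (Equiv.swap a b)).toRingHom = csf n I h N := by
  rw [csf, Polynomial.map_sum]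
  refine sum_nbij' (flipOddComponents h a b) (flipOddComponents h a b)
    (fun γ hγ => mem_filter.mpr ⟨mem_univ _, isProper_flipOddComponents (mem_filter.mp hγ).2⟩)
    (fun γ hγ => mem_filter.mpr ⟨mem_univ _, isProper_flipOddComponents (mem_filter.mp hγ).2⟩)
    (fun _ _ => flipOddComponents_involutive) (fun _ _ => flipOddComponents_involutive)
    fun γ hγ => ?_
  have hp := (mem_filter.mp hγ).2
  rw [Polynomial.map_mul, Polynomial.map_C, Polynomial.map_pow, Polynomial.map_X,
    AlgHom.toRingHom_eq_coe, RingHom.coe_coe, rename_swap_prod_X hgen hp,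
    asc_flipOddComponents hab hgen hp]

end Colourings

section Permutations

variable {σ R : Type*} [CommSemiring R]

theorem map_rename_one (p : Polynomial (MvPolynomial σ R)) :
    p.map (MvPolynomial.rename ⇑(1 : Equiv.Perm σ)).toRingHom = p := by
  rw [Equiv.Perm.coe_one, MvPolynomial.rename_id]
  exact Polynomial.map_id

theorem map_rename_mul (τ₁ τ₂ : Equiv.Perm σ) (p : Polynomial (MvPolynomial σ R)) :
    p.map (MvPolynomial.rename ⇑(τ₁ * τ₂)).toRingHom =
      (p.map (MvPolynomial.rename τ₂).toRingHom).map (MvPolynomial.rename τ₁).toRingHom := by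
  rw [Polynomial.map_map, Equiv.Perm.coe_mul, ← MvPolynomial.rename_comp_rename]
  rfl

theorem map_rename_eq_self_of_adjacent_swaps {N : ℕ} (p : Polynomial (MvPolynomial (Fin N) R))
    (hp : ∀ a b : Fin N, (a : ℕ) + 1 = b →
      p.map (MvPolynomial.rename (Equiv.swap a b)).toRingHom = p)
    (τ : Equiv.Perm (Fin N)) : p.map (MvPolynomial.rename τ).toRingHom = p := by
  rcases N with _ | m
  · rw [Subsingleton.elim τ 1, map_rename_one]
  have hτ : τ ∈ Submonoid.closure (Set.range fun i : Fin m => Equiv.swap i.castSucc i.succ) := by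
    rw [Equiv.Perm.mclosure_swap_castSucc_succ]
    trivial
  induction hτ using Submonoid.closure_induction with
  | mem _ hτ =>
    obtain ⟨i, rfl⟩ := hτ
    exact hp _ _ (by simp)
  | one => exact map_rename_one p
  | mul τ₁ τ₂ _ _ h₁ h₂ => rw [map_rename_mul, h₂, h₁]

end Permutations

end GenHess

open GenHess

theorem csf_symmetric_general (n : ℕ) (I : Finset ℕ) (h : ℕ → ℕ) (hgen : IsGenHess n I h)
    (N : ℕ) (σ : Equiv.Perm (Fin N)) :
    Polynomial.map (MvPolynomial.rename (fun a => σ a) :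
        MvPolynomial (Fin N) ℤ →ₐ[ℤ] MvPolynomial (Fin N) ℤ).toRingHom
      (csf n I h N) = csf n I h N :=
  map_rename_eq_self_of_adjacent_swaps _ (fun _ _ hab => map_rename_swap_csf hab hgen) σ

/-- Symmetry of the generalized chromatic quasisymmetric function: permuting the
variables `x_1, …, x_N` leaves `csf_q^N(h)` unchanged. -/
theorem csf_symmetric (n : ℕ) (I : Finset ℕ) (h : ℕ → ℕ) (hgen : IsGenHess n I h)
    (N : ℕ) (hN : 1 ≤ N) (σ : Equiv.Perm (Fin N)) :
    Polynomial.map (MvPolynomial.rename (fun a => σ a) :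
        MvPolynomial (Fin N) ℤ →ₐ[ℤ] MvPolynomial (Fin N) ℤ).toRingHom
      (csf n I h N) = csf n I h N :=
  csf_symmetric_general n I h hgen N σ
end
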